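/- In the coin-toss model, consider the mechanism q* with release space {(0,1), (1/2,1)} defined by q*((0,1) | X=0) = 1, q*((0,1) | X=1) = 3/10, and q*((1/2,1) | X=1) = 7/10. Then for each release value (i,j) of positive probability, i is a Bayes-optimal decision for Bob and j is a Bayes-optimal decision for Eve given that release value; the resulting integrated risks are R_B(q*) = 13/40 and R_E(q*) = 3/4, so that R_A(q*) = 13/40 − (3/4)λ, which is strictly smaller than the optimal randomised-response risk 19/52 − (3/4)λ for every λ > 0. -/

import Mathlib

open scoped BigOperators

namespace CoinToss

/-- The parameter θ ∈ {0, 1/2}, encoded by a Bool: `false ↦ 0`, `true ↦ 1/2`. -/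
noncomputable def thetaVal (t : Bool) : ℝ := if t then 1/2 else 0

/-- Joint pmf of (θ, X): prior P(θ=0)=P(θ=1/2)=1/2 and X | θ ~ Bern(θ). -/
noncomputable def coinJoint (t x : Bool) : ℝ :=
  if t then 1/4 else (if x then 0 else 1/2)

/-- Bob's 0-1 loss L_B(θ, δ) = 1{δ ≠ θ}. -/
noncomputable def LB (θ δ : ℝ) : ℝ := if δ = θ then 0 else 1

/-- Eve's loss: 0 if δ = x, 1 if (δ,x)=(1,0), 10 if (δ,x)=(0,1). -/
noncomputable def LE (x δ : Bool) : ℝ := if δ = x then 0 else if δ then 1 else 10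

variable {H : Type*} [Fintype H]

/-- A release mechanism: Markov kernel from the data space {0,1} to a finite release space. -/
def IsMechanism (q : Bool → H → ℝ) : Prop :=
  (∀ x h, 0 ≤ q x h) ∧ ∀ x, ∑ h, q x h = 1

/-- Probability of the release value `h` under the joint law of (θ, X, η). -/
noncomputable def relP (q : Bool → H → ℝ) (h : H) : ℝ :=
  ∑ t, ∑ x, coinJoint t x * q x h

/-- Bob's posterior expected loss of decision `d` given release value `h`. -/
noncomputable def postLossB (q : Bool → H → ℝ) (h : H) (d : ℝ) : ℝ :=
  (∑ t, ∑ x, coinJoint t x * q x h * LB (thetaVal t) d) / relP q h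

/-- Eve's posterior expected loss of decision `d` given release value `h`. -/
noncomputable def postLossE (q : Bool → H → ℝ) (h : H) (d : Bool) : ℝ :=
  (∑ t, ∑ x, coinJoint t x * q x h * LE x d) / relP q h

/-- Bayes optimality for Bob: at every release value of positive probability, the rule takes
values in the decision space {0, 1/2} and minimizes the posterior expected loss there. -/
def IsBayesB (q : Bool → H → ℝ) (dB : H → ℝ) : Prop :=
  ∀ h, 0 < relP q h →
    dB h ∈ ({0, 1/2} : Set ℝ) ∧
    ∀ d ∈ ({0, 1/2} : Set ℝ), postLossB q h (dB h) ≤ postLossB q h d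

/-- Bayes optimality for Eve. -/
def IsBayesE (q : Bool → H → ℝ) (dE : H → Bool) : Prop :=
  ∀ h, 0 < relP q h → ∀ d : Bool, postLossE q h (dE h) ≤ postLossE q h d

/-- Bob's integrated risk R_B(q) = E[L_B(θ, δ_B(η))]. -/
noncomputable def RB (q : Bool → H → ℝ) (dB : H → ℝ) : ℝ :=
  ∑ t, ∑ x, ∑ h, coinJoint t x * q x h * LB (thetaVal t) (dB h)

/-- Eve's integrated risk R_E(q) = E[L_E(X, δ_E(η))]. -/
noncomputable def RE (q : Bool → H → ℝ) (dE : H → Bool) : ℝ :=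
  ∑ t, ∑ x, ∑ h, coinJoint t x * q x h * LE x (dE h)

end CoinToss

open CoinToss

namespace CoinToss
/-- The optimal mechanism from the linear program. Its release space is
{(0,1), (1/2,1)} ⊆ 𝒟_B × 𝒟_E, encoded as Bool × Bool where the first coordinate encodes
Bob's decision via `thetaVal` (false ↦ 0, true ↦ 1/2) and the second is Eve's decision
(true ↦ 1). It satisfies q*((0,1)|X=0)=1, q*((0,1)|X=1)=3/10, q*((1/2,1)|X=1)=7/10. -/
noncomputable def qstar : Bool → Bool × Bool → ℝ := fun x h =>
  if x then (if h = (false, true) then 3/10 else if h = (true, true) then 7/10 else 0)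
  else (if h = (false, true) then 1 else 0)
end CoinToss

/-!
Bob's and Eve's posterior losses at a release `h` share the normaliser `P(η = h)`, so
optimality can be checked on the unnormalised losses `E[L; η = h]`, which also sum over `h`
to the integrated risks. At the release `(0, 1)` the weight `3/10` makes Eve exactly
indifferent (both decisions cost `3/4`), and at `(1/2, 1)` both Bob and Eve lose nothing.
-/

namespace CoinToss

variable {H : Type*}

noncomputable def jointLossB (q : Bool → H → ℝ) (h : H) (d : ℝ) : ℝ :=
  ∑ t, ∑ x, coinJoint t x * q x h * LB (thetaVal t) d

noncomputable def jointLossE (q : Bool → H → ℝ) (h : H) (d : Bool) : ℝ :=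
  ∑ t, ∑ x, coinJoint t x * q x h * LE x d

theorem isBayesB_of_jointLossB_le {q : Bool → H → ℝ} {dB : H → ℝ}
    (hmem : ∀ h, dB h ∈ ({0, 1/2} : Set ℝ))
    (hle : ∀ h, ∀ d ∈ ({0, 1/2} : Set ℝ), jointLossB q h (dB h) ≤ jointLossB q h d) :
    IsBayesB q dB :=
  fun h hp => ⟨hmem h, fun d hd => div_le_div_of_nonneg_right (hle h d hd) hp.le⟩

theorem isBayesE_of_jointLossE_le {q : Bool → H → ℝ} {dE : H → Bool}
    (hle : ∀ h d, jointLossE q h (dE h) ≤ jointLossE q h d) : IsBayesE q dE :=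
  fun h hp d => div_le_div_of_nonneg_right (hle h d) hp.le

theorem RB_eq_sum_jointLossB [Fintype H] (q : Bool → H → ℝ) (dB : H → ℝ) :
    RB q dB = ∑ h, jointLossB q h (dB h) := by
  simp_rw [RB, jointLossB, Finset.sum_comm (γ := H)]

theorem RE_eq_sum_jointLossE [Fintype H] (q : Bool → H → ℝ) (dE : H → Bool) :
    RE q dE = ∑ h, jointLossE q h (dE h) := by
  simp_rw [RE, jointLossE, Finset.sum_comm (γ := H)]

theorem thetaVal_mem (t : Bool) : thetaVal t ∈ ({0, 1/2} : Set ℝ) := by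
  cases t <;> simp [thetaVal]

theorem jointLossB_qstar (i j : Bool) (d : ℝ) :
    jointLossB qstar (i, j) d =
      if (i, j) = (false, true) then 1/2 * LB 0 d + 13/40 * LB (1/2) d
      else if (i, j) = (true, true) then 7/40 * LB (1/2) d else 0 := by
  cases i <;> cases j <;> norm_num [jointLossB, qstar, coinJoint, thetaVal]
  ring

theorem jointLossE_qstar (i j d : Bool) :
    jointLossE qstar (i, j) d =
      if (i, j) = (false, true) then 3/4 * LE false d + 3/40 * LE true d
      else if (i, j) = (true, true) then 7/40 * LE true d else 0 := by
  cases i <;> cases j <;> norm_num [jointLossE, qstar, coinJoint]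
  ring

theorem jointLossB_qstar_le (h : Bool × Bool) (d : ℝ) (hd : d ∈ ({0, 1/2} : Set ℝ)) :
    jointLossB qstar h (thetaVal h.1) ≤ jointLossB qstar h d := by
  obtain ⟨i, j⟩ := h
  rcases hd with rfl | rfl <;> cases i <;> cases j <;>
    norm_num [jointLossB_qstar, thetaVal, LB]

theorem jointLossE_qstar_le (h : Bool × Bool) (d : Bool) :
    jointLossE qstar h h.2 ≤ jointLossE qstar h d := by
  obtain ⟨i, j⟩ := h
  cases d <;> cases i <;> cases j <;> norm_num [jointLossE_qstar, LE]

theorem RB_qstar : RB qstar (fun h => thetaVal h.1) = 13/40 := by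
  norm_num [RB_eq_sum_jointLossB, Fintype.sum_prod_type, jointLossB_qstar, thetaVal, LB]

theorem RE_qstar : RE qstar (fun h => h.2) = 3/4 := by
  norm_num [RE_eq_sum_jointLossE, Fintype.sum_prod_type, jointLossE_qstar, LE]

end CoinToss

/-- In the coin-toss model, under the mechanism q* the rules δ_B(i,j) = i and δ_E(i,j) = j
are Bayes-optimal at every release value of positive probability, with integrated risks
R_B(q*) = 13/40 and R_E(q*) = 3/4, so R_A(q*) = 13/40 - (3/4)λ, which is strictly smaller
than the optimal randomised-response risk 19/52 - (3/4)λ for every λ > 0. -/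
theorem coin_toss_linear_program :
    IsBayesB qstar (fun h => thetaVal h.1) ∧
    IsBayesE qstar (fun h => h.2) ∧
    RB qstar (fun h => thetaVal h.1) = 13/40 ∧
    RE qstar (fun h => h.2) = 3/4 ∧
    ∀ lam : ℝ, 0 < lam →
      RB qstar (fun h => thetaVal h.1) - lam * RE qstar (fun h => h.2)
        = 13/40 - 3/4 * lam ∧
      13/40 - 3/4 * lam < 19/52 - 3/4 * lam := by
  refine ⟨isBayesB_of_jointLossB_le (fun h => thetaVal_mem h.1) jointLossB_qstar_le,
    isBayesE_of_jointLossE_le jointLossE_qstar_le, RB_qstar, RE_qstar, fun lam _ => ⟨?_, ?_⟩⟩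
  · rw [RB_qstar, RE_qstar]
    ring
  · norm_num
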